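/- Restriction identity for the sets of feasible labels: Let ρ = (σ₁,…,σ_T) ∈ U^T be a request sequence, 𝓘 a k-level hierarchical service pattern over {1,…,T}, ℓ ∈ {1,…,k}, and p^{ℓ+1},…,p^k ∈ U such that Q^ℓ(p^{ℓ+1},…,p^k) ≠ ∅. Let L^ℓ be the last interval of level ℓ, let 𝓙 be the ℓ-level hierarchical service pattern over L^ℓ obtained by restricting levels 1,…,ℓ of 𝓘 to the times in L^ℓ, and let S = {t ∈ L^ℓ : σ_t ∉ {p^{ℓ+1},…,p^k}}. Define Q̃ to be the set of points q ∈ U for which there exists a labeling γ' of 𝓙 with γ'(L^ℓ) = q such that for every t ∈ S some interval of 𝓙 containing t is labeled σ_t. Then Q^ℓ(p^{ℓ+1},…,p^k) = Q̃. -/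
import Mathlib


/-- A `k`-level service pattern over times `{1,…,T}` is encoded by `start ℓ t`, which says
that a new interval of level `ℓ` begins at time `t`; each level starts an interval at
time `1`. -/
def IsPattern (k : ℕ) (start : ℕ → ℕ → Prop) : Prop :=
  ∀ ℓ, 1 ≤ ℓ → ℓ ≤ k → start ℓ 1

/-- A `k`-level service pattern over `{1,…,T}` is hierarchical if each level refines the
next one. -/
def Hierarchical (k T : ℕ) (start : ℕ → ℕ → Prop) : Prop :=
  ∀ ℓ t, 1 ≤ ℓ → ℓ < k → 1 ≤ t → t ≤ T → start (ℓ + 1) t → start ℓ t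

/-- A labeling of a `k`-level pattern over times `{a,…,b}` assigns a point of `U` to each
level at each time, constant on each interval of each level. -/
def IsLabelingFrom {U : Type*} (k a b : ℕ) (start : ℕ → ℕ → Prop) (lab : ℕ → ℕ → U) :
    Prop :=
  ∀ ℓ t, 1 ≤ ℓ → ℓ ≤ k → a < t → t ≤ b → ¬ start ℓ t → lab ℓ t = lab ℓ (t - 1)

/-- `Qset U k T start σ ℓ p` is the set `Q^ℓ(p^{ℓ+1},…,p^k)` of points `q ∈ U` for which
some feasible labeling of the pattern w.r.t. `σ₁,…,σ_T` labels the last interval of level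
`ℓ` with `q` and the last interval of level `i` with `p i` for all `i ∈ {ℓ+1,…,k}`. -/
def Qset (U : Type*) (k T : ℕ) (start : ℕ → ℕ → Prop) (σ : ℕ → U) (ℓ : ℕ) (p : ℕ → U) :
    Set U :=
  {q | ∃ lab : ℕ → ℕ → U, IsLabelingFrom k 1 T start lab ∧
    (∀ t, 1 ≤ t → t ≤ T → ∃ j, 1 ≤ j ∧ j ≤ k ∧ lab j t = σ t) ∧
    lab ℓ T = q ∧ (∀ i, ℓ < i → i ≤ k → lab i T = p i)}

lemma start_down {k T : ℕ} {start : ℕ → ℕ → Prop}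
    (hhier : Hierarchical k T start) {t : ℕ} (ht1 : 1 ≤ t) (htT : t ≤ T)
    {j : ℕ} (hj1 : 1 ≤ j) :
    ∀ j', j ≤ j' → j' ≤ k → start j' t → start j t := by
  intro j' hle
  induction j', hle using Nat.le_induction with
  | base => exact fun _ hs => hs
  | succ n hn ih =>
    intro hnk hs
    exact ih (by omega) (hhier n t (by omega) (by omega) ht1 htT hs)

lemma lab_const {U : Type*} {k a₀ a T : ℕ} {start : ℕ → ℕ → Prop} {lab : ℕ → ℕ → U}
    (hlab : IsLabelingFrom k a₀ T start lab) (ha : a₀ ≤ a)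
    {j : ℕ} (hj1 : 1 ≤ j) (hjk : j ≤ k)
    (hnostart : ∀ s, a < s → s ≤ T → ¬ start j s) :
    ∀ t, a ≤ t → t ≤ T → lab j t = lab j a := by
  intro t hat
  induction t, hat using Nat.le_induction with
  | base => intro _; rfl
  | succ s hs ih =>
    intro hsT
    have h := hlab j (s + 1) hj1 hjk (by omega) hsT (hnostart (s + 1) (by omega) hsT)
    simp only [Nat.add_sub_cancel] at h
    rw [h]; exact ih (by omega)

/-- Restriction identity for the sets of feasible labels: let `𝓘` (encoded by `start`) be a
`k`-level hierarchical service pattern over `{1,…,T}`, `ℓ ∈ {1,…,k}`, and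
`p^{ℓ+1},…,p^k ∈ U` with `Q^ℓ(p^{ℓ+1},…,p^k) ≠ ∅`. Let `a` be the first time of the last
interval `L^ℓ = {a,…,T}` of level `ℓ`, let `𝓙` be the `ℓ`-level pattern over `{a,…,T}`
obtained by restricting levels `1,…,ℓ` of `𝓘` to `L^ℓ`, and let
`S = {t ∈ L^ℓ : σ_t ∉ {p^{ℓ+1},…,p^k}}`. Then `Q^ℓ(p^{ℓ+1},…,p^k)` equals the set `Q̃` of
points `q` for which there is a labeling `γ'` of `𝓙` with `γ'(L^ℓ) = q` such that for
every `t ∈ S` some interval of `𝓙` containing `t` is labeled `σ_t`. -/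
theorem restriction_identity {U : Type*} (k : ℕ) (hk : 1 ≤ k)
    (T : ℕ) (hT : 1 ≤ T) (σ : ℕ → U) (start : ℕ → ℕ → Prop)
    (hpat : IsPattern k start) (hhier : Hierarchical k T start)
    (ℓ : ℕ) (hℓ1 : 1 ≤ ℓ) (hℓk : ℓ ≤ k) (p : ℕ → U)
    (a : ℕ) (ha1 : 1 ≤ a) (haT : a ≤ T) (hastart : start ℓ a)
    (halast : ∀ t, a < t → t ≤ T → ¬ start ℓ t)
    (hne : (Qset U k T start σ ℓ p).Nonempty) :
    Qset U k T start σ ℓ p =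
      {q | ∃ lab : ℕ → ℕ → U, IsLabelingFrom ℓ a T start lab ∧
        (∀ t, a ≤ t → t ≤ T → (∀ i, ℓ < i → i ≤ k → σ t ≠ p i) →
          ∃ j, 1 ≤ j ∧ j ≤ ℓ ∧ lab j t = σ t) ∧
        lab ℓ T = q} := by
  ext q
  simp only [Set.mem_setOf_eq, Qset]
  constructor
  · rintro ⟨lab, hlab, hfeas, hlT, hp⟩
    refine ⟨lab, ?_, ?_, hlT⟩
    · intro j t hj1 hjℓ hat htT hns
      exact hlab j t hj1 (le_trans hjℓ hℓk) (by omega) htT hns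
    · intro t hat htT hnp
      obtain ⟨j, hj1, hjk, hjt⟩ := hfeas t (by omega) htT
      refine ⟨j, hj1, ?_, hjt⟩
      by_contra hjgt
      push_neg at hjgt
      have hno : ∀ s, a < s → s ≤ T → ¬ start j s := fun s h1 h2 hs =>
        halast s h1 h2 (start_down hhier (by omega) h2 hℓ1 j (le_of_lt hjgt) hjk hs)
      have hc := lab_const hlab ha1 (by omega) hjk hno t hat htT
      have hcT := lab_const hlab ha1 (by omega) hjk hno T haT le_rfl
      exact hnp j hjgt hjk (by rw [← hjt, hc, ← hcT, hp j hjgt hjk])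
  · rintro ⟨lab', hlab', hfeas', hlT⟩
    obtain ⟨q₀, lab₀, hlab₀, hfeas₀, _, hp₀⟩ := hne
    classical
    refine ⟨fun j t => if j ≤ ℓ ∧ a ≤ t then lab' j t else lab₀ j t, ?_, ?_, ?_, ?_⟩
    · intro j t hj1 hjk h1t htT hns
      by_cases hjℓ : j ≤ ℓ
      · by_cases hta : a ≤ t
        · rcases eq_or_lt_of_le hta with heq | hlt
          · exact absurd (heq ▸ start_down hhier ha1 haT hj1 ℓ hjℓ hℓk hastart) hns
          · have h1 : a ≤ t - 1 := by omega
            simp only [hjℓ, hta, h1, and_self, if_true, true_and]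
            exact hlab' j t hj1 hjℓ hlt htT hns
        · have h1 : ¬ a ≤ t - 1 := by omega
          simp only [hta, h1, and_false, if_false]
          exact hlab₀ j t hj1 hjk h1t htT hns
      · simp only [hjℓ, false_and, if_false]
        exact hlab₀ j t hj1 hjk h1t htT hns
    · intro t h1t htT
      by_cases hta : a ≤ t
      · by_cases hex : ∃ i, ℓ < i ∧ i ≤ k ∧ σ t = p i
        · obtain ⟨i, hiℓ, hik, hσ⟩ := hex
          refine ⟨i, by omega, hik, ?_⟩
          have hiℓ' : ¬ i ≤ ℓ := by omega
          simp only [hiℓ', false_and, if_false]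
          have hno : ∀ s, a < s → s ≤ T → ¬ start i s := fun s hs1 hs2 hs =>
            halast s hs1 hs2 (start_down hhier (by omega) hs2 hℓ1 i (by omega) hik hs)
          have hc := lab_const hlab₀ ha1 (by omega) hik hno t hta htT
          have hcT := lab_const hlab₀ ha1 (by omega) hik hno T haT le_rfl
          rw [hc, ← hcT, hp₀ i hiℓ hik, hσ]
        · push_neg at hex
          obtain ⟨j, hj1, hjℓ, hjt⟩ := hfeas' t hta htT
            (fun i h1 h2 => hex i h1 h2)
          refine ⟨j, hj1, le_trans hjℓ hℓk, ?_⟩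
          simp only [hjℓ, hta, and_self, if_true]
          exact hjt
      · obtain ⟨j, hj1, hjk, hjt⟩ := hfeas₀ t h1t htT
        have : ¬ (j ≤ ℓ ∧ a ≤ t) := fun h => hta h.2
        refine ⟨j, hj1, hjk, ?_⟩
        simp only [this, if_false]
        exact hjt
    · simp only [le_refl, haT, and_self, if_true]
      exact hlT
    · intro i hiℓ hik
      have : ¬ (i ≤ ℓ ∧ a ≤ T) := fun h => by omega
      simp only [this, if_false]
      exact hp₀ i hiℓ hik
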